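/- Let E be a real normed vector space, A ⊆ E, N a positive integer, and let M, M̲ ≥ 0, δ ≥ 0, c ≥ 0. For each i = 1, …, N let f_i, g_i : E → ℝ satisfy |f_i(u) − f_i(w)| ≤ M‖u − w‖ and |g_i(u) − g_i(w)| ≤ M̲‖u − w‖ for all u, w ∈ A, and let x_i, y_i ∈ A satisfy f_i(y_i) − g_i(y_i) ≤ c. Assume (1/N) ∑_{i=1}^N ‖x_i − y_i‖ ≤ δ. Then: (i) (1/N) ∑_{i=1}^N ( f_i(x_i) − g_i(x_i) ) ≤ (M + M̲)δ + c. (ii) If in addition for each i there is a nonempty set S_i ⊆ A with x_i ∈ S_i, g_i(y) ≤ f_i(y) for all y ∈ S_i, and g_i(x_i) ≤ g_i(y) for all y ∈ S_i, then (1/N) ∑_{i=1}^N inf_{y∈S_i} f_i(y) − (1/N) ∑_{i=1}^N inf_{y∈S_i} g_i(y) ≤ (M + M̲)δ + c. -/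

import Mathlib

/-!
Saturation at `y i` transfers to `x i` at the cost of the two Lipschitz constants times
`‖x i - y i‖`; averaging over the scenarios turns this into `(M + M') * δ + c`. For (ii), the
model `g i` is minimised at `x i` on `S i`, so its infimum is `g i (x i)`, while the infimum of
`f i` is at most `f i (x i)`: the gap of the infima is bounded by the gap at `x i`.
-/

open Finset

lemma sub_le_of_sub_le_of_abs_sub_le {E : Type*} [SeminormedAddCommGroup E] {f g : E → ℝ}
    {u w : E} {M M' c : ℝ} (hf : |f u - f w| ≤ M * ‖u - w‖) (hg : |g w - g u| ≤ M' * ‖w - u‖)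
    (hw : f w - g w ≤ c) : f u - g u ≤ (M + M') * ‖u - w‖ + c := by
  rw [norm_sub_rev] at hg
  linarith [(abs_le.mp hf).2, (abs_le.mp hg).2]

lemma average_le_of_le_affine {ι : Type*} {s : Finset ι} (hs : s.Nonempty) {a d : ι → ℝ}
    {K δ c : ℝ} (hK : 0 ≤ K) (had : ∀ i ∈ s, a i ≤ K * d i + c)
    (hd : 1 / (#s : ℝ) * ∑ i ∈ s, d i ≤ δ) :
    1 / (#s : ℝ) * ∑ i ∈ s, a i ≤ K * δ + c := by
  have hcard : (0 : ℝ) < #s := by exact_mod_cast hs.card_pos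
  calc 1 / (#s : ℝ) * ∑ i ∈ s, a i ≤ 1 / (#s : ℝ) * ∑ i ∈ s, (K * d i + c) := by
        gcongr with i hi
        exact had i hi
    _ = K * (1 / (#s : ℝ) * ∑ i ∈ s, d i) + c := by
        rw [sum_add_distrib, ← mul_sum, sum_const, nsmul_eq_mul]
        field_simp
    _ ≤ K * δ + c := by gcongr

lemma sInf_image_sub_sInf_image_le {α : Type*} {f g : α → ℝ} {S : Set α} {x : α} (hx : x ∈ S)
    (hgf : ∀ z ∈ S, g z ≤ f z) (hmin : ∀ z ∈ S, g x ≤ g z) :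
    sInf (f '' S) - sInf (g '' S) ≤ f x - g x := by
  have hg : sInf (g '' S) = g x :=
    IsLeast.csInf_eq ⟨Set.mem_image_of_mem g hx, Set.forall_mem_image.mpr hmin⟩
  have hf : sInf (f '' S) ≤ f x :=
    csInf_le ⟨g x, Set.forall_mem_image.mpr fun z hz => (hmin z hz).trans (hgf z hz)⟩
      (Set.mem_image_of_mem f hx)
  linarith

theorem sddp_average_saturation_general
    {E : Type*} [NormedAddCommGroup E] [NormedSpace ℝ E]
    (A : Set E) (N : ℕ) (hN : 0 < N) (M M' δ c : ℝ)
    (hM : 0 ≤ M) (hM' : 0 ≤ M')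
    (f g : Fin N → E → ℝ) (x y : Fin N → E)
    (hxA : ∀ i, x i ∈ A) (hyA : ∀ i, y i ∈ A)
    (hf : ∀ i, ∀ u ∈ A, ∀ w ∈ A, |f i u - f i w| ≤ M * ‖u - w‖)
    (hg : ∀ i, ∀ u ∈ A, ∀ w ∈ A, |g i u - g i w| ≤ M' * ‖u - w‖)
    (hsat : ∀ i, f i (y i) - g i (y i) ≤ c)
    (havg : (1 / (N : ℝ)) * ∑ i, ‖x i - y i‖ ≤ δ) :
    ((1 / (N : ℝ)) * ∑ i, (f i (x i) - g i (x i)) ≤ (M + M') * δ + c) ∧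
    (∀ S : Fin N → Set E,
      (∀ i, S i ⊆ A) → (∀ i, (S i).Nonempty) → (∀ i, x i ∈ S i) →
      (∀ i, ∀ z ∈ S i, g i z ≤ f i z) → (∀ i, ∀ z ∈ S i, g i (x i) ≤ g i z) →
      (1 / (N : ℝ)) * ∑ i, sInf (f i '' S i) - (1 / (N : ℝ)) * ∑ i, sInf (g i '' S i) ≤
        (M + M') * δ + c) := by
  have hne : (univ : Finset (Fin N)).Nonempty := univ_nonempty_iff.mpr ⟨⟨0, hN⟩⟩
  have hgap : (1 / (N : ℝ)) * ∑ i, (f i (x i) - g i (x i)) ≤ (M + M') * δ + c := by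
    simpa using average_le_of_le_affine hne (add_nonneg hM hM')
      (fun i _ => sub_le_of_sub_le_of_abs_sub_le (hf i _ (hxA i) _ (hyA i))
        (hg i _ (hyA i) _ (hxA i)) (hsat i))
      (by simpa using havg)
  refine ⟨hgap, fun S _ _ hxS hgf hmin => ?_⟩
  calc (1 / (N : ℝ)) * ∑ i, sInf (f i '' S i) - (1 / (N : ℝ)) * ∑ i, sInf (g i '' S i)
      = (1 / (N : ℝ)) * ∑ i, (sInf (f i '' S i) - sInf (g i '' S i)) := by
        rw [sum_sub_distrib, mul_sub]
    _ ≤ (1 / (N : ℝ)) * ∑ i, (f i (x i) - g i (x i)) := by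
        gcongr _ * ?_
        exact sum_le_sum fun i _ => sInf_image_sub_sInf_image_le (hxS i) (hgf i) (hmin i)
    _ ≤ (M + M') * δ + c := hgap

/-- Abstract form of Lemma 5.1 (avg_distance) for the SDDP method. -/
theorem sddp_average_saturation
    {E : Type*} [NormedAddCommGroup E] [NormedSpace ℝ E]
    (A : Set E) (N : ℕ) (hN : 0 < N) (M M' δ c : ℝ)
    (hM : 0 ≤ M) (hM' : 0 ≤ M') (hδ : 0 ≤ δ) (hc : 0 ≤ c)
    (f g : Fin N → E → ℝ) (x y : Fin N → E)
    (hxA : ∀ i, x i ∈ A) (hyA : ∀ i, y i ∈ A)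
    (hf : ∀ i, ∀ u ∈ A, ∀ w ∈ A, |f i u - f i w| ≤ M * ‖u - w‖)
    (hg : ∀ i, ∀ u ∈ A, ∀ w ∈ A, |g i u - g i w| ≤ M' * ‖u - w‖)
    (hsat : ∀ i, f i (y i) - g i (y i) ≤ c)
    (havg : (1 / (N : ℝ)) * ∑ i, ‖x i - y i‖ ≤ δ) :
    ((1 / (N : ℝ)) * ∑ i, (f i (x i) - g i (x i)) ≤ (M + M') * δ + c) ∧
    (∀ S : Fin N → Set E,
      (∀ i, S i ⊆ A) → (∀ i, (S i).Nonempty) → (∀ i, x i ∈ S i) →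
      (∀ i, ∀ z ∈ S i, g i z ≤ f i z) → (∀ i, ∀ z ∈ S i, g i (x i) ≤ g i z) →
      (1 / (N : ℝ)) * ∑ i, sInf (f i '' S i) - (1 / (N : ℝ)) * ∑ i, sInf (g i '' S i) ≤
        (M + M') * δ + c) :=
  sddp_average_saturation_general A N hN M M' δ c hM hM' f g x y hxA hyA hf hg hsat havg
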